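/- For every integer n ≥ 2 and every ε ∈ (0,1), there exists μ̌ > 0 such that for every μ > μ̌ the equation h(x, ε) = μ has no solutions x ∈ (0,1). -/

import Mathlib

/-- `k_n = (1/(4n)) · Σ_{k=1}^{n-1} 1/sin(kπ/n)` -/
noncomputable def kn (n : ℕ) : ℝ :=
  (1 / (4 * n)) * ∑ k ∈ Finset.Icc 1 (n - 1), 1 / Real.sin (k * Real.pi / n)

/-- `φ_k = (2k-1)π/n`, and `u_k = cos φ_k`. -/
noncomputable def phi (n k : ℕ) : ℝ := (2 * (k : ℝ) - 1) * Real.pi / n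

/-- The reduced central configuration function
`h(x, ε) = −n·k_n·(ε−x³)/(1−x³) − (x²/(1−x³))·Σ_{k=1}^{n} [x(1−ε) − (1−εx²)u_k]/(1+x²−2xu_k)^{3/2}`,
where `u_k = cos φ_k`.  Solutions of `h(x, ε) = μ` are the rosette central configurations. -/
noncomputable def h (n : ℕ) (x ε : ℝ) : ℝ :=
  -((n : ℝ) * kn n) * (ε - x ^ 3) / (1 - x ^ 3) -
    (x ^ 2 / (1 - x ^ 3)) * ∑ k ∈ Finset.Icc 1 n,
      (x * (1 - ε) - (1 - ε * x ^ 2) * Real.cos (phi n k)) /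
        (1 + x ^ 2 - 2 * x * Real.cos (phi n k)) ^ ((3 : ℝ) / 2)

/-!
Writing `G(x)` for `x²` times the sum in `h`, one has
`h(x, ε) = (n k_n (1 - ε) - G(x)) / (1 - x³) - n k_n`.
Since every `u_k < 1`, the distances `1 + x² - 2 x u_k` stay positive on `x ≥ 0`, so `G` is `C¹`
there and hence Lipschitz on `[0, 1]`: `G(1) - G(x) ≤ K (1 - x) ≤ K (1 - x³)`.
At `x = 1` the half-angle formula gives `G(1) = (1 - ε)/4 · Σ_j 1 / sin((2j - 1)π/(2n))`, which
dominates `n k_n (1 - ε) = (1 - ε)/4 · Σ_k 1 / sin(kπ/n)`: match each angle `kπ/n` injectively with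
an odd multiple of `π/(2n)` lying closer to `0` or to `π`. Hence `h ≤ K - n k_n` on `(0, 1)`.
-/

open Real Finset

noncomputable def rosetteTerm (ε u x : ℝ) : ℝ :=
  x ^ 2 * ((x * (1 - ε) - (1 - ε * x ^ 2) * u) / (1 + x ^ 2 - 2 * x * u) ^ ((3 : ℝ) / 2))

noncomputable def rosetteSum (n : ℕ) (ε x : ℝ) : ℝ :=
  ∑ k ∈ Icc 1 n, rosetteTerm ε (cos (phi n k)) x

lemma one_add_sq_sub_two_mul_pos {x u : ℝ} (hx : 0 ≤ x) (hu : u < 1) :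
    0 < 1 + x ^ 2 - 2 * x * u := by
  rcases hx.eq_or_lt with rfl | hx
  · norm_num
  · nlinarith [sq_nonneg (1 - x)]

lemma contDiffOn_rosetteTerm (ε : ℝ) {u : ℝ} (hu : u < 1) :
    ContDiffOn ℝ 1 (rosetteTerm ε u) (Set.Ici 0) := by
  unfold rosetteTerm
  have hd : ContDiffOn ℝ 1 (fun x : ℝ => (1 + x ^ 2 - 2 * x * u) ^ ((3 : ℝ) / 2)) (Set.Ici 0) :=
    (by fun_prop : ContDiffOn ℝ 1 (fun x : ℝ => 1 + x ^ 2 - 2 * x * u) (Set.Ici 0)).rpow_const_of_ne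
      fun x hx => (one_add_sq_sub_two_mul_pos hx hu).ne'
  refine (contDiffOn_id.pow 2).mul ((by fun_prop : ContDiffOn ℝ 1 _ _).div hd fun x hx => ?_)
  exact (rpow_pos_of_pos (one_add_sq_sub_two_mul_pos hx hu) _).ne'

lemma cos_phi_lt_one {n k : ℕ} (hk : k ∈ Icc 1 n) : cos (phi n k) < 1 := by
  obtain ⟨hk1, hkn⟩ := Finset.mem_Icc.mp hk
  have hn : (0 : ℝ) < n := by exact_mod_cast hk1.trans hkn
  have hk1' : (1 : ℝ) ≤ k := by exact_mod_cast hk1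
  have hkn' : (k : ℝ) ≤ n := by exact_mod_cast hkn
  have hpos : 0 < phi n k := div_pos (mul_pos (by linarith) pi_pos) hn
  have hlt : phi n k < 2 * π := by
    rw [phi, div_lt_iff₀ hn]
    nlinarith [pi_pos]
  exact (cos_le_one _).lt_of_ne fun h =>
    hpos.ne' ((cos_eq_one_iff_of_lt_of_lt (by linarith) hlt).mp h)

lemma exists_lipschitzOnWith_rosetteSum (n : ℕ) (ε : ℝ) :
    ∃ K, LipschitzOnWith K (rosetteSum n ε) (Set.Icc 0 1) := by
  refine ContDiffOn.exists_lipschitzOnWith (n := 1) ?_ one_ne_zero (convex_Icc 0 1) isCompact_Icc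
  unfold rosetteSum
  refine ContDiffOn.sum fun k hk => ?_
  exact (contDiffOn_rosetteTerm ε (cos_phi_lt_one hk)).mono Set.Icc_subset_Ici_self

lemma sq_rpow_three_halves {a : ℝ} (ha : 0 ≤ a) : (a ^ 2) ^ ((3 : ℝ) / 2) = a ^ 3 := by
  rw [← rpow_natCast, ← rpow_mul ha]
  norm_num

lemma rosetteTerm_one_cos_two_mul (ε : ℝ) {θ : ℝ} (hθ : 0 < sin θ) :
    rosetteTerm ε (cos (2 * θ)) 1 = (1 - ε) / (4 * sin θ) := by
  have hd : 1 + 1 ^ 2 - 2 * 1 * cos (2 * θ) = (2 * sin θ) ^ 2 := by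
    rw [cos_two_mul, cos_sq']; ring
  rw [rosetteTerm, hd, sq_rpow_three_halves (by positivity), cos_two_mul, cos_sq']
  field_simp
  ring

lemma sin_mul_pi_div_pos {a b : ℝ} (ha : 0 < a) (hab : a < b) : 0 < sin (a * π / b) := by
  have hb := ha.trans hab
  refine sin_pos_of_pos_of_lt_pi (by have := pi_pos; positivity) ?_
  rw [div_lt_iff₀ hb]
  nlinarith [pi_pos]

lemma sin_le_sin_of_le_of_le_pi_sub {a b : ℝ} (ha : 0 ≤ a) (hab : a ≤ b) (hb : b ≤ π - a) :
    sin a ≤ sin b := by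
  rcases le_total b (π / 2) with hb' | hb'
  · exact sin_le_sin_of_le_of_le_pi_div_two (by linarith [pi_pos]) hb' hab
  · rw [← sin_pi_sub b]
    exact sin_le_sin_of_le_of_le_pi_div_two (by linarith [pi_pos]) (by linarith) (by linarith)

lemma sin_odd_angle_pos {n j : ℕ} (hj : j ∈ Icc 1 n) : 0 < sin ((2 * j - 1) * π / (2 * n)) := by
  have hj := Finset.mem_Icc.mp hj
  have : (1 : ℝ) ≤ j := by exact_mod_cast hj.1
  have : (j : ℝ) ≤ n := by exact_mod_cast hj.2
  exact sin_mul_pi_div_pos (by linarith) (by linarith)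

lemma sin_odd_angle_le_of_two_mul_le {n k : ℕ} (hk : 1 ≤ k) (h2k : 2 * k ≤ n) :
    sin ((2 * k - 1) * π / (2 * n)) ≤ sin (k * π / n) := by
  have hk' : (1 : ℝ) ≤ k := by exact_mod_cast hk
  have h2k' : 2 * (k : ℝ) ≤ n := by exact_mod_cast h2k
  have hn : (0 : ℝ) < n := by linarith
  have ht : 0 < π / (2 * n) := by positivity
  have hπ : π = 2 * n * (π / (2 * n)) := by field_simp
  rw [show (2 * k - 1) * π / (2 * n) = (2 * k - 1) * (π / (2 * n)) by ring,
    show k * π / n = 2 * k * (π / (2 * n)) by field_simp]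
  generalize π / (2 * n) = t at *
  apply sin_le_sin_of_le_of_le_pi_sub <;> nlinarith

lemma sin_odd_angle_le_of_lt_two_mul {n k : ℕ} (hk : k + 1 ≤ n) (h2k : n < 2 * k) :
    sin ((2 * (k + 1) - 1) * π / (2 * n)) ≤ sin (k * π / n) := by
  have hk' : (k : ℝ) + 1 ≤ n := by exact_mod_cast hk
  have h2k' : (n : ℝ) + 1 ≤ 2 * k := by exact_mod_cast h2k
  have hn : (0 : ℝ) < n := by linarith
  have ht : 0 < π / (2 * n) := by positivity
  have hπ : π = 2 * n * (π / (2 * n)) := by field_simp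
  rw [← sin_pi_sub, show (2 * (k + 1) - 1) * π / (2 * n) = (2 * k + 1) * (π / (2 * n)) by ring,
    show k * π / n = 2 * k * (π / (2 * n)) by field_simp]
  generalize π / (2 * n) = t at *
  apply sin_le_sin_of_le_of_le_pi_sub <;> nlinarith

lemma sum_one_div_sin_le (n : ℕ) :
    ∑ k ∈ Icc 1 (n - 1), 1 / sin (k * π / n) ≤
      ∑ j ∈ Icc 1 n, 1 / sin ((2 * j - 1) * π / (2 * n)) := by
  let ι : ℕ → ℕ := fun k => if 2 * k ≤ n then k else k + 1
  have hι_mem : ∀ k ∈ Icc 1 (n - 1), ι k ∈ Icc 1 n := by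
    intro k hk
    simp only [Finset.mem_Icc, ι] at hk ⊢
    split_ifs <;> omega
  have hι_inj : Set.InjOn ι (Icc 1 (n - 1)) := by
    intro a ha b hb hab
    simp only [coe_Icc, Set.mem_Icc, ι] at ha hb hab
    split_ifs at hab <;> omega
  have hle : ∀ k ∈ Icc 1 (n - 1),
      1 / sin (k * π / n) ≤ 1 / sin ((2 * (ι k : ℝ) - 1) * π / (2 * n)) := by
    intro k hk
    refine one_div_le_one_div_of_le (sin_odd_angle_pos (hι_mem k hk)) ?_
    have hk := Finset.mem_Icc.mp hk
    simp only [ι]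
    split_ifs with h2k
    · exact sin_odd_angle_le_of_two_mul_le hk.1 h2k
    · push_cast
      exact sin_odd_angle_le_of_lt_two_mul (by omega) (by omega)
  calc _ ≤ ∑ k ∈ Icc 1 (n - 1), 1 / sin ((2 * (ι k : ℝ) - 1) * π / (2 * n)) := sum_le_sum hle
    _ = ∑ j ∈ (Icc 1 (n - 1)).image ι, 1 / sin ((2 * j - 1) * π / (2 * n)) :=
      (sum_image (f := fun j : ℕ => 1 / sin ((2 * (j : ℝ) - 1) * π / (2 * n))) hι_inj).symm
    _ ≤ _ := sum_le_sum_of_subset_of_nonneg (image_subset_iff.mpr hι_mem)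
      fun j hj _ => (one_div_pos.mpr (sin_odd_angle_pos hj)).le

lemma phi_eq_two_mul (n k : ℕ) : phi n k = 2 * ((2 * k - 1) * π / (2 * n)) := by
  unfold phi
  ring

lemma natCast_mul_kn (n : ℕ) : n * kn n = (∑ k ∈ Icc 1 (n - 1), 1 / sin (k * π / n)) / 4 := by
  rcases n.eq_zero_or_pos with rfl | hn
  · simp [kn]
  · rw [kn, ← mul_assoc, show (n : ℝ) * (1 / (4 * n)) = 1 / 4 by field_simp]
    ring

lemma rosetteSum_one (n : ℕ) (ε : ℝ) :
    rosetteSum n ε 1 = (1 - ε) / 4 * ∑ j ∈ Icc 1 n, 1 / sin ((2 * j - 1) * π / (2 * n)) := by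
  rw [rosetteSum, mul_sum]
  refine sum_congr rfl fun j hj => ?_
  rw [phi_eq_two_mul, rosetteTerm_one_cos_two_mul _ (sin_odd_angle_pos hj)]
  ring

lemma natCast_mul_kn_mul_le_rosetteSum_one (n : ℕ) {ε : ℝ} (hε : ε ≤ 1) :
    n * kn n * (1 - ε) ≤ rosetteSum n ε 1 := by
  rw [natCast_mul_kn, rosetteSum_one]
  calc _ = (1 - ε) / 4 * ∑ k ∈ Icc 1 (n - 1), 1 / sin (k * π / n) := by ring
    _ ≤ _ := mul_le_mul_of_nonneg_left (sum_one_div_sin_le n) (by linarith)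

lemma h_eq_rosetteSum {n : ℕ} {x : ℝ} (ε : ℝ) (hx : x ^ 3 ≠ 1) :
    h n x ε = (n * kn n * (1 - ε) - rosetteSum n ε x) / (1 - x ^ 3) - n * kn n := by
  have hx' : 1 - x ^ 3 ≠ 0 := sub_ne_zero.mpr hx.symm
  rw [h, rosetteSum]
  simp only [rosetteTerm, ← Finset.mul_sum]
  generalize (∑ k ∈ Icc 1 n, _ : ℝ) = S
  field_simp
  ring

lemma h_le_of_lipschitzOnWith {n : ℕ} {ε : ℝ} {K : NNReal} (hε : ε ≤ 1)
    (hK : LipschitzOnWith K (rosetteSum n ε) (Set.Icc 0 1)) {x : ℝ} (hx : x ∈ Set.Ico 0 1) :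
    h n x ε ≤ K - n * kn n := by
  obtain ⟨hx0, hx1⟩ := hx
  have hx3 : x ^ 3 < 1 := pow_lt_one₀ hx0 hx1 (by norm_num)
  have hlip : rosetteSum n ε 1 - rosetteSum n ε x ≤ K * (1 - x) := by
    have := hK.dist_le_mul 1 ⟨zero_le_one, le_rfl⟩ x ⟨hx0, hx1.le⟩
    rw [Real.dist_eq, Real.dist_eq, abs_of_pos (sub_pos.mpr hx1)] at this
    exact (le_abs_self _).trans this
  have hcube : K * (1 - x) ≤ K * (1 - x ^ 3) :=
    mul_le_mul_of_nonneg_left (by nlinarith [mul_nonneg hx0 hx0]) K.coe_nonneg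
  have hvalue := natCast_mul_kn_mul_le_rosetteSum_one n hε
  rw [h_eq_rosetteSum ε hx3.ne, sub_le_sub_iff_right, div_le_iff₀ (by linarith)]
  linarith

theorem no_cc_lt_one_for_large_mu_general (n : ℕ) (ε : ℝ)
    (hε : ε ∈ Set.Ioo (0 : ℝ) 1) :
    ∃ muCheck : ℝ, 0 < muCheck ∧ ∀ μ : ℝ, muCheck < μ →
      ∀ x ∈ Set.Ioo (0 : ℝ) 1, h n x ε ≠ μ := by
  obtain ⟨K, hK⟩ := exists_lipschitzOnWith_rosetteSum n ε
  refine ⟨|K - n * kn n| + 1, by positivity, fun μ hμ x hx => ?_⟩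
  have := h_le_of_lipschitzOnWith hε.2.le hK (Set.Ioo_subset_Ico_self hx)
  linarith [le_abs_self ((K : ℝ) - n * kn n)]

/-- For `n ≥ 2`, `ε ∈ (0,1)`, there exists `μ̌ > 0` such that for every `μ > μ̌`
the equation `h(x, ε) = μ` has no solutions `x ∈ (0,1)`. -/
theorem no_cc_lt_one_for_large_mu (n : ℕ) (hn : 2 ≤ n) (ε : ℝ)
    (hε : ε ∈ Set.Ioo (0 : ℝ) 1) :
    ∃ muCheck : ℝ, 0 < muCheck ∧ ∀ μ : ℝ, muCheck < μ →
      ∀ x ∈ Set.Ioo (0 : ℝ) 1, h n x ε ≠ μ :=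
  no_cc_lt_one_for_large_mu_general n ε hε
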